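/- arXiv:2309.00069 — 3 statements merged into one kernel-verified Lean document; each statement's English description precedes it below -/
import Mathlib

section
/- Let A, Â be bounded linear operators on a Banach space X with ‖e^{tA}‖, ‖e^{tÂ}‖ ≤ M for t ∈ [0, h]. Then for each p ≥ 1, ‖φ_p(hA) − φ_p(hÂ)‖_{L(X)} ≤ M² h ‖A − Â‖/(p−1)!, where φ_p(B) = ∫_0^1 e^{(1-θ)B} θ^{p-1}/(p-1)! dθ. -/
/-!
The path `τ ↦ e^{(s-τ)A} e^{τÂ}` runs from `e^{sA}` to `e^{sÂ}` and has derivative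
`e^{(s-τ)A} (Â - A) e^{τÂ}`, of norm at most `M² ‖A - Â‖` for `τ ∈ [0, s] ⊆ [0, h]`; by the mean
value inequality `‖e^{sA} - e^{sÂ}‖ ≤ M² s ‖A - Â‖ ≤ M² h ‖A - Â‖`. Integrating this with
`s = (1 - θ) h` against the weight `θ^{p-1}/(p-1)! ≤ 1/(p-1)!` over `[0, 1]` bounds
`φ_p(hA) - φ_p(hÂ)`.
-/

noncomputable def phiOp {X : Type*} [NormedAddCommGroup X] [NormedSpace ℝ X] [CompleteSpace X]
    (p : ℕ) (A : X →L[ℝ] X) : X →L[ℝ] X :=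
  if p = 0 then NormedSpace.exp A
  else ∫ θ in (0:ℝ)..1,
    ((θ ^ (p - 1) / (Nat.factorial (p-1) : ℝ)) • NormedSpace.exp ((1 - θ) • A))

open NormedSpace Set MeasureTheory

section ExpSmul

variable {𝔸 : Type*} [NormedRing 𝔸] [NormedAlgebra ℝ 𝔸] [CompleteSpace 𝔸]

theorem hasDerivAt_exp_smul_mul_exp_smul (A B : 𝔸) (s τ : ℝ) :
    HasDerivAt (fun τ : ℝ => exp ((s - τ) • A) * exp (τ • B))
      (exp ((s - τ) • A) * (B - A) * exp (τ • B)) τ := by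
  have hA : HasDerivAt (fun τ : ℝ => exp ((s - τ) • A)) (-(A * exp ((s - τ) • A))) τ :=
    ((hasDerivAt_exp_smul_const' A (s - τ)).scomp τ
      ((hasDerivAt_id τ).const_sub s)).congr_deriv (by simp)
  have hcomm : A * exp ((s - τ) • A) = exp ((s - τ) • A) * A :=
    (((Commute.refl A).smul_left (s - τ)).exp_left).symm.eq
  refine (hA.mul (hasDerivAt_exp_smul_const' B τ)).congr_deriv ?_
  rw [hcomm]
  noncomm_ring

theorem norm_exp_smul_sub_exp_smul_le {A B : 𝔸} {M s : ℝ} (hs : 0 ≤ s)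
    (hA : ∀ t ∈ Icc 0 s, ‖exp (t • A)‖ ≤ M) (hB : ∀ t ∈ Icc 0 s, ‖exp (t • B)‖ ≤ M) :
    ‖exp (s • A) - exp (s • B)‖ ≤ M ^ 2 * s * ‖A - B‖ := by
  have hM : 0 ≤ M := (norm_nonneg _).trans (hA 0 ⟨le_rfl, hs⟩)
  have hderiv_le : ∀ τ ∈ Ico 0 s,
      ‖exp ((s - τ) • A) * (B - A) * exp (τ • B)‖ ≤ M ^ 2 * ‖A - B‖ := fun τ ⟨hτ0, hτs⟩ =>
    calc ‖exp ((s - τ) • A) * (B - A) * exp (τ • B)‖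
        ≤ ‖exp ((s - τ) • A)‖ * ‖B - A‖ * ‖exp (τ • B)‖ := norm_mul₃_le
      _ ≤ M * ‖B - A‖ * M := by
        gcongr
        · exact hA _ ⟨by linarith, by linarith⟩
        · exact hB _ ⟨hτ0, hτs.le⟩
      _ = M ^ 2 * ‖A - B‖ := by rw [norm_sub_rev]; ring
  have := norm_image_sub_le_of_norm_deriv_le_segment'
    (fun τ _ => (hasDerivAt_exp_smul_mul_exp_smul A B s τ).hasDerivWithinAt) hderiv_le s
    ⟨hs, le_rfl⟩
  simpa [norm_sub_rev, mul_assoc, mul_comm s] using this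

end ExpSmul

section PhiOp

variable {X : Type*} [NormedAddCommGroup X] [NormedSpace ℝ X] [CompleteSpace X]

theorem phiOp_sub_phiOp {p : ℕ} (hp : p ≠ 0) (A B : X →L[ℝ] X) :
    phiOp p A - phiOp p B = ∫ θ in (0:ℝ)..1, (θ ^ (p - 1) / (p - 1).factorial : ℝ) •
      (exp ((1 - θ) • A) - exp ((1 - θ) • B)) := by
  have hint : ∀ C : X →L[ℝ] X, IntervalIntegrable
      (fun θ : ℝ => (θ ^ (p - 1) / (p - 1).factorial : ℝ) • exp ((1 - θ) • C)) volume 0 1 :=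
    fun C => (((continuous_pow _).div_const _).smul
      ((differentiable_exp_smul_const ℝ C).continuous.comp
        (continuous_const.sub continuous_id))).intervalIntegrable 0 1
  simp only [phiOp, if_neg hp, smul_sub]
  exact (intervalIntegral.integral_sub (hint A) (hint B)).symm

end PhiOp

theorem phiOp_diff_bound_general {X : Type*} [NormedAddCommGroup X] [NormedSpace ℝ X] [CompleteSpace X]
    (A Ahat : X →L[ℝ] X) (M h : ℝ) (hh : 0 < h)
    (hA : ∀ t ∈ Set.Icc (0:ℝ) h, ‖NormedSpace.exp (t • A)‖ ≤ M)
    (hAhat : ∀ t ∈ Set.Icc (0:ℝ) h, ‖NormedSpace.exp (t • Ahat)‖ ≤ M)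
    (p : ℕ) (hp : 1 ≤ p) :
    ‖phiOp p (h • A) - phiOp p (h • Ahat)‖
      ≤ M ^ 2 * h * ‖A - Ahat‖ / (Nat.factorial (p - 1) : ℝ) := by
  rw [phiOp_sub_phiOp (by omega)]
  calc _ ≤ M ^ 2 * h * ‖A - Ahat‖ / (p - 1).factorial * |(1 : ℝ) - 0| :=
        intervalIntegral.norm_integral_le_of_norm_le_const fun θ hθ => ?_
    _ = _ := by norm_num
  rw [uIoc_of_le zero_le_one] at hθ
  obtain ⟨hθ0, hθ1⟩ := hθ
  have hs : (1 - θ) * h ∈ Icc 0 h := ⟨by nlinarith, by nlinarith⟩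
  have hexp := norm_exp_smul_sub_exp_smul_le (A := A) (B := Ahat) (M := M) hs.1
    (fun t ht => hA t ⟨ht.1, ht.2.trans hs.2⟩) (fun t ht => hAhat t ⟨ht.1, ht.2.trans hs.2⟩)
  rw [smul_smul, smul_smul, norm_smul, Real.norm_of_nonneg (by positivity)]
  calc θ ^ (p - 1) / (p - 1).factorial * ‖exp (((1 - θ) * h) • A) - exp (((1 - θ) * h) • Ahat)‖
      ≤ 1 / (p - 1).factorial * (M ^ 2 * h * ‖A - Ahat‖) := by
        gcongr
        · exact pow_le_one₀ hθ0.le hθ1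
        · exact hexp.trans (by gcongr; exact hs.2)
    _ = M ^ 2 * h * ‖A - Ahat‖ / (p - 1).factorial := by ring

theorem phiOp_diff_bound {X : Type*} [NormedAddCommGroup X] [NormedSpace ℝ X] [CompleteSpace X]
    (A Ahat : X →L[ℝ] X) (M h : ℝ) (hM : 1 ≤ M) (hh : 0 < h)
    (hA : ∀ t ∈ Set.Icc (0:ℝ) h, ‖NormedSpace.exp (t • A)‖ ≤ M)
    (hAhat : ∀ t ∈ Set.Icc (0:ℝ) h, ‖NormedSpace.exp (t • Ahat)‖ ≤ M)
    (p : ℕ) (hp : 1 ≤ p) :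
    ‖phiOp p (h • A) - phiOp p (h • Ahat)‖
      ≤ M ^ 2 * h * ‖A - Ahat‖ / (Nat.factorial (p - 1) : ℝ) :=
  phiOp_diff_bound_general A Ahat M h hh hA hAhat p hp
end

section
/- Define ū_{n_2} = û_n + h φ_2(hĴ_n) û'_n and ū_{n_3} = û_n + h Ĵ_n ū_{n_2} + h ĝ_n(û_n), where û'_n = ĝ_n(û_n) + Ĵ_n û_n and Ĵ_n û'_n = û''_n. Then ū_{n_3} − 2ū_{n_2} + û_n = (h²/6) û''_n + h³ (φ_3(hĴ_n) − 2φ_4(hĴ_n)) Ĵ_n û''_n = (h²/6) û''_n + O(h³). -/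
/-!
Integrating the derivative of `θ ↦ θ^(p+1)/(p+1)! • exp((1 - θ) A)` over `[0, 1]` gives the
recurrence `φ_{p+1}(A) = 1/(p+1)! + A φ_{p+2}(A)`, and `Ĵ` commutes with every `φ_p(hĴ)`.
Using the recurrence once for `φ_2` in `ū_{n_2}` and once for `φ_3` in the resulting remainder,
the second difference collapses to `(1/2 - 2/6) h² û''_n` plus the stated `h³` term.
-/

open NormedSpace

section Algebra

variable {𝔸 : Type*} [NormedRing 𝔸] [NormedAlgebra ℝ 𝔸] [CompleteSpace 𝔸]

theorem hasDerivAt_exp_one_sub_smul (a : 𝔸) (θ : ℝ) :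
    HasDerivAt (fun θ : ℝ => exp ((1 - θ) • a)) (-(a * exp ((1 - θ) • a))) θ := by
  simpa [Function.comp_def] using
    (hasDerivAt_exp_smul_const' a (1 - θ)).scomp θ ((hasDerivAt_id θ).const_sub 1)

theorem continuous_exp_one_sub_smul (a : 𝔸) : Continuous fun θ : ℝ => exp ((1 - θ) • a) :=
  continuous_iff_continuousAt.2 fun θ => (hasDerivAt_exp_one_sub_smul a θ).continuousAt

theorem Commute.intervalIntegral_right {b : 𝔸} {f : ℝ → 𝔸} {a₁ a₂ : ℝ}
    (hf : IntervalIntegrable f MeasureTheory.volume a₁ a₂) (h : ∀ θ, Commute b (f θ)) :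
    Commute b (∫ θ in a₁..a₂, f θ) := by
  have hl := (ContinuousLinearMap.mul ℝ 𝔸 b).intervalIntegral_comp_comm hf
  have hr := ((ContinuousLinearMap.mul ℝ 𝔸).flip b).intervalIntegral_comp_comm hf
  simp only [ContinuousLinearMap.mul_apply', ContinuousLinearMap.flip_apply] at hl hr
  rw [Commute, SemiconjBy, ← hl, ← hr]
  simp_rw [(h _).eq]

end Algebra

section PhiOp

variable {X : Type*} [NormedAddCommGroup X] [NormedSpace ℝ X] [CompleteSpace X]

noncomputable def phiKernel (p : ℕ) (A : X →L[ℝ] X) (θ : ℝ) : X →L[ℝ] X :=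
  (θ ^ p / p.factorial) • exp ((1 - θ) • A)

theorem phiOp_succ (p : ℕ) (A : X →L[ℝ] X) :
    phiOp (p + 1) A = ∫ θ in (0:ℝ)..1, phiKernel p A θ := by
  simp [phiOp, phiKernel]

theorem continuous_phiKernel (p : ℕ) (A : X →L[ℝ] X) : Continuous (phiKernel p A) :=
  ((continuous_pow p).div_const _).smul (continuous_exp_one_sub_smul A)

theorem hasDerivAt_phiKernel_succ (p : ℕ) (A : X →L[ℝ] X) (θ : ℝ) :
    HasDerivAt (phiKernel (p + 1) A) (phiKernel p A θ - A * phiKernel (p + 1) A θ) θ := by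
  have hcoeff : HasDerivAt (fun θ : ℝ => θ ^ (p + 1) / ((p + 1).factorial : ℝ))
      (θ ^ p / p.factorial) θ := by
    refine ((hasDerivAt_pow (p + 1) θ).div_const _).congr_deriv ?_
    rw [Nat.factorial_succ]
    push_cast
    field_simp
  refine (hcoeff.smul (hasDerivAt_exp_one_sub_smul A θ)).congr_deriv ?_
  simp only [phiKernel, mul_smul_comm, smul_neg]
  abel

theorem Commute.phiOp_right {A B : X →L[ℝ] X} (h : Commute B A) (p : ℕ) :
    Commute B (phiOp p A) := by
  have hexp : ∀ t : ℝ, Commute B (NormedSpace.exp (t • A)) := fun t => (h.smul_right t).exp_right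
  cases p with
  | zero => simpa [phiOp] using hexp 1
  | succ p =>
    rw [phiOp_succ]
    exact Commute.intervalIntegral_right ((continuous_phiKernel p A).intervalIntegrable 0 1)
      fun θ => (hexp _).smul_right _

theorem phiOp_succ_eq (p : ℕ) (A : X →L[ℝ] X) :
    phiOp (p + 1) A = ((p + 1).factorial : ℝ)⁻¹ • 1 + A * phiOp (p + 2) A := by
  have hint : ∀ q, IntervalIntegrable (phiKernel q A) MeasureTheory.volume 0 1 :=
    fun q => (continuous_phiKernel q A).intervalIntegrable 0 1
  have hmul : ∫ θ in (0:ℝ)..1, A * phiKernel (p + 1) A θ = A * phiOp (p + 2) A := by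
    simpa [phiOp_succ] using
      (ContinuousLinearMap.mul ℝ _ A).intervalIntegral_comp_comm (hint (p + 1))
  have ftc := intervalIntegral.integral_eq_sub_of_hasDerivAt
    (fun θ _ => hasDerivAt_phiKernel_succ p A θ) ((hint p).sub ((hint (p + 1)).const_mul A))
  rw [intervalIntegral.integral_sub (hint p) ((hint (p + 1)).const_mul A), hmul,
    ← phiOp_succ] at ftc
  simp only [phiKernel, one_pow, zero_pow (Nat.succ_ne_zero p), zero_div, zero_smul, sub_zero,
    sub_self, one_div, exp_zero, one_smul] at ftc
  rw [← ftc]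
  abel

theorem phiOp_succ_apply (p : ℕ) (A : X →L[ℝ] X) (x : X) :
    phiOp (p + 1) A x = ((p + 1).factorial : ℝ)⁻¹ • x + A (phiOp (p + 2) A x) := by
  rw [phiOp_succ_eq]
  rfl

end PhiOp

theorem second_difference_expansion_general
    {X : Type*} [NormedAddCommGroup X] [NormedSpace ℝ X] [CompleteSpace X]
    (Jhat : X →L[ℝ] X) (ghat : X → X) (uhat : X) (h : ℝ) :
    let uhat' := ghat uhat + Jhat uhat
    let uhat'' := Jhat uhat'
    let u2 := uhat + h • (phiOp 2 (h • Jhat)) uhat'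
    let u3 := uhat + h • Jhat u2 + h • ghat uhat
    u3 - 2 • u2 + uhat
      = (h ^ 2 / 6) • uhat''
        + (h ^ 3) • ((phiOp 3 (h • Jhat) - 2 • phiOp 4 (h • Jhat)) (Jhat uhat'')) := by
  intro uhat' uhat'' u2 u3
  set A := h • Jhat
  have hJφ : ∀ p x, Jhat (phiOp p A x) = phiOp p A (Jhat x) := fun p x =>
    DFunLike.congr_fun (((Commute.refl Jhat).smul_right h).phiOp_right p).eq x
  have hJu' : Jhat uhat' = uhat'' := rfl
  have hφ2 : phiOp 2 A uhat' = (2 : ℝ)⁻¹ • uhat' + h • phiOp 3 A uhat'' := by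
    rw [phiOp_succ_apply 1, smul_apply, hJφ, hJu']
    norm_num
  have hφ3 : phiOp 3 A uhat'' = (6 : ℝ)⁻¹ • uhat'' + h • phiOp 4 A (Jhat uhat'') := by
    rw [phiOp_succ_apply 2, smul_apply, hJφ]
    norm_num [Nat.factorial]
  have hJu : Jhat uhat = uhat' - ghat uhat := by simp [uhat']
  show uhat + h • Jhat (uhat + h • phiOp 2 A uhat') + h • ghat uhat - 2 • (uhat + h • phiOp 2 A uhat')
      + uhat = (h ^ 2 / 6) • uhat'' + h ^ 3 • (phiOp 3 A - 2 • phiOp 4 A) (Jhat uhat'')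
  simp only [hφ2, map_add, map_smul, hJφ, hJu, hJu', sub_apply, smul_apply]
  rw [hφ3]
  module

theorem second_difference_expansion
    {X : Type*} [NormedAddCommGroup X] [NormedSpace ℝ X] [CompleteSpace X]
    (Jhat : X →L[ℝ] X) (ghat : X → X) (uhat : X) (h : ℝ) (hh : 0 < h) :
    let uhat' := ghat uhat + Jhat uhat
    let uhat'' := Jhat uhat'
    let u2 := uhat + h • (phiOp 2 (h • Jhat)) uhat'
    let u3 := uhat + h • Jhat u2 + h • ghat uhat
    u3 - 2 • u2 + uhat
      = (h ^ 2 / 6) • uhat''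
        + (h ^ 3) • ((phiOp 3 (h • Jhat) - 2 • phiOp 4 (h • Jhat)) (Jhat uhat'')) :=
  second_difference_expansion_general Jhat ghat uhat h
end

section
/- Discrete Gronwall lemma: let (e_n) be nonnegative reals with e_0 = 0 and e_n ≤ C Σ_{j=0}^{n-1} h (h e_j + e_j² + h^q) for all n with nh ≤ T, where q ≥ 1 and C, h, T > 0. Then for h sufficiently small there exists a constant K depending only on C, T, q such that e_n ≤ K h^q for all n with nh ≤ T. -/
/-! Bootstrap with `K = 2 C T`: if `e j ≤ K h^q` for all earlier `j`, then the nonlinear part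
`h e j + (e j)^2` is at most `(K + K²) h · h^q ≤ h^q` once `h ≤ 1` and `h (K + K²) ≤ 1`, so every
summand is at most `2 h^{q+1}`; summing over `n ≤ T / h` terms gives `e n ≤ 2 C T h^q = K h^q`. -/

namespace Paper

open Finset

lemma mul_add_sq_le_pow {h K x : ℝ} {q : ℕ} (hh : 0 < h) (h1 : h ≤ 1) (hq : 1 ≤ q)
    (hK : h * (K + K ^ 2) ≤ 1) (hx0 : 0 ≤ x) (hx : x ≤ K * h ^ q) :
    h * x + x ^ 2 ≤ h ^ q := by
  have hpow : h ^ q ≤ h := pow_le_of_le_one hh.le h1 (by omega)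
  calc h * x + x ^ 2 ≤ h * (K * h ^ q) + (K * h ^ q) ^ 2 := by gcongr
    _ = h ^ q * (h * K + K ^ 2 * h ^ q) := by ring
    _ ≤ h ^ q * (h * K + K ^ 2 * h) := by gcongr
    _ = h ^ q * (h * (K + K ^ 2)) := by ring
    _ ≤ h ^ q := mul_le_of_le_one_right (by positivity) hK

lemma le_of_le_sum_of_mul_add_sq_le {C T h : ℝ} {q n : ℕ} {e : ℕ → ℝ} (hC : 0 ≤ C) (hh : 0 < h)
    (hnT : n * h ≤ T) (hrec : e n ≤ C * ∑ j ∈ range n, h * (h * e j + e j ^ 2 + h ^ q))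
    (hprev : ∀ j < n, h * e j + e j ^ 2 ≤ h ^ q) :
    e n ≤ 2 * C * T * h ^ q := by
  have hsum : ∑ j ∈ range n, h * (h * e j + e j ^ 2 + h ^ q) ≤ n * (h * (2 * h ^ q)) := by
    have hterm : ∀ j ∈ range n, h * (h * e j + e j ^ 2 + h ^ q) ≤ h * (2 * h ^ q) := by
      intro j hj
      have := hprev j (mem_range.mp hj)
      gcongr
      linarith
    simpa using sum_le_card_nsmul (range n) _ _ hterm
  calc e n ≤ C * (n * (h * (2 * h ^ q))) := hrec.trans (by gcongr)
    _ = 2 * C * h ^ q * (n * h) := by ring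
    _ ≤ 2 * C * h ^ q * T := by gcongr
    _ = 2 * C * T * h ^ q := by ring

theorem discrete_gronwall (C T : ℝ) (q : ℕ) (hC : 0 < C) (hT : 0 < T) (hq : 1 ≤ q) :
    ∃ h0 > 0, ∃ K > 0, ∀ h : ℝ, 0 < h → h ≤ h0 →
      ∀ e : ℕ → ℝ, (∀ n, 0 ≤ e n) → e 0 = 0 →
        (∀ n : ℕ, (n : ℝ) * h ≤ T →
          e n ≤ C * ∑ j ∈ Finset.range n, h * (h * e j + (e j) ^ 2 + h ^ q)) →
        ∀ n : ℕ, (n : ℝ) * h ≤ T → e n ≤ K * h ^ q := by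
  set K : ℝ := 2 * C * T
  have hK : 0 < K := by positivity
  refine ⟨min 1 (1 / (K + K ^ 2)), by positivity, K, hK, ?_⟩
  intro h hh hh0 e he _ hrec n
  have h1 : h ≤ 1 := hh0.trans (min_le_left _ _)
  have hhK : h * (K + K ^ 2) ≤ 1 :=
    (le_div_iff₀ (by positivity)).mp (hh0.trans (min_le_right _ _))
  induction n using Nat.strong_induction_on with
  | _ n ih =>
    intro hnT
    refine le_of_le_sum_of_mul_add_sq_le hC.le hh hnT (hrec n hnT) fun j hj => ?_
    have hjT : (j : ℝ) * h ≤ T := le_trans (by gcongr) hnT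
    exact mul_add_sq_le_pow hh h1 hq hhK (he j) (ih j hj hjT)
end Paper
end
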